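/- arXiv:2003.06023 — 2 statements merged into one kernel-verified Lean document; each statement's English description precedes it below -/
import Mathlib

section
/- Local average potential outcomes under one-sided noncompliance, part II: under Assumptions 1, 2 and 4, E[Y(0,0) · 1_{C_i}] = E[Y | Z_i=0, Z_j=0] − E[Y · (1−D_i) | Z_i=1, Z_j=0] and E[Y(0,0) · 1_{C_j}] = E[Y | Z_i=0, Z_j=0] − E[Y · (1−D_j) | Z_i=0, Z_j=1], where 1_A denotes the indicator of the event A. -/
/-!
Under one-sided noncompliance nobody is treated when both instruments are off, so on
`{Z = (0,0)}` the observed outcome is `Y(0,0)`; when only `i` is encouraged, `j` stays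
untreated, so on `{Z = (1,0)}` the observed `Y · (1 - D_i)` is `Y(0,0) · 1{D_i(1,0) = 0}`.
Independence of the instruments from the potential quantities removes the conditioning, and
the difference of the two expectations is `E[Y(0,0) · 1{D_i(1,0) = 1}]`, where
`D_i(1,0) = 1` singles out the compliers because `D_i(0,1) = 0`. The case of unit `j` is the
same statement with the two units exchanged.
-/
open MeasureTheory ProbabilityTheory

noncomputable def bInd (b : Bool) : ℝ := if b then 1 else 0

section
variable {Ω β : Type*} [MeasurableSpace Ω] [MeasurableSpace β] {P : Measure Ω}

lemma ProbabilityTheory.IndepFun.integral_cond_preimage [IsFiniteMeasure P] {X : Ω → ℝ}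
    {Z : Ω → β} {s : Set β}
    (hXZ : IndepFun X Z P) (hX : AEStronglyMeasurable X P) (hZ : Measurable Z)
    (hs : MeasurableSet s) (hPs : P (Z ⁻¹' s) ≠ 0) :
    ∫ ω, X ω ∂P[|Z ⁻¹' s] = ∫ ω, X ω ∂P := by
  have ht : MeasurableSet (Z ⁻¹' s) := hZ hs
  have hind : IndepFun X ((Z ⁻¹' s).indicator 1) P :=
    hXZ.comp measurable_id (measurable_one.indicator hs : Measurable (s.indicator (1 : β → ℝ)))
  have hPt : P.real (Z ⁻¹' s) ≠ 0 := (measureReal_ne_zero_iff (measure_ne_top _ _)).2 hPs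
  calc ∫ ω, X ω ∂P[|Z ⁻¹' s]
      = (P.real (Z ⁻¹' s))⁻¹ * ∫ ω, X ω * (Z ⁻¹' s).indicator 1 ω ∂P := by
        rw [ProbabilityTheory.cond, integral_smul_measure, ← integral_indicator ht, smul_eq_mul,
          ENNReal.toReal_inv]
        congr 2
        ext ω
        by_cases hω : ω ∈ Z ⁻¹' s <;> simp [hω]
    _ = ∫ ω, X ω ∂P := by
        rw [hind.integral_fun_mul_eq_mul_integral hX
          ((aestronglyMeasurable_one).indicator ht), integral_indicator_one ht]
        field_simp

lemma integral_cond_congr {E : Type*} [NormedAddCommGroup E] [NormedSpace ℝ E] {f g : Ω → E}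
    {t : Set Ω} (ht : MeasurableSet t) (hfg : ∀ᵐ ω ∂P, ω ∈ t → f ω = g ω) :
    ∫ ω, f ω ∂P[|t] = ∫ ω, g ω ∂P[|t] :=
  integral_congr_ae <| by
    filter_upwards [ae_cond_mem ht, cond_absolutelyContinuous.ae_le hfg] with ω hω h using h hω

end

lemma measurable_bInd : Measurable bInd := .of_discrete

section
variable {Ω : Type*} [MeasurableSpace Ω] {P : Measure Ω} [IsFiniteMeasure P]
  {Y : Bool → Bool → Ω → ℝ} {Di Dj : Bool → Bool → Ω → Bool} {Zi Zj : Ω → Bool}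

lemma integral_mul_complier_indicator_eq
    (hY : Integrable (Y false false) P) (hDi : Measurable (Di true false))
    (hZi : Measurable Zi) (hZj : Measurable Zj)
    (hP00 : P ({x | Zi x = false} ∩ {x | Zj x = false}) ≠ 0)
    (hP10 : P ({x | Zi x = true} ∩ {x | Zj x = false}) ≠ 0)
    (hIV : IndepFun (fun ω => (Y false false ω, Di true false ω))
      (fun ω => (Zi ω, Zj ω)) P)
    (hosn : ∀ᵐ ω ∂P, Di false false ω = false ∧ Di false true ω = false ∧
      Dj false false ω = false ∧ Dj false true ω = false) :
    ∫ ω, Y false false ω *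
        Set.indicator {x | Di true false x = true ∧ Di false true x = false} (fun _ => (1:ℝ)) ω
        ∂P
      = ∫ ω, Y (Di (Zi ω) (Zj ω) ω) (Dj (Zj ω) (Zi ω) ω) ω
          ∂(P[|{x | Zi x = false} ∩ {x | Zj x = false}])
        - ∫ ω, Y (Di (Zi ω) (Zj ω) ω) (Dj (Zj ω) (Zi ω) ω) ω *
            (1 - bInd (Di (Zi ω) (Zj ω) ω))
          ∂(P[|{x | Zi x = true} ∩ {x | Zj x = false}]) := by
  have hZ : Measurable fun ω => (Zi ω, Zj ω) := hZi.prodMk hZj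
  have hsingle (z z' : Bool) : MeasurableSet ({z} ×ˢ {z'} : Set (Bool × Bool)) := .of_discrete
  set X : Ω → ℝ := fun ω => Y false false ω * (1 - bInd (Di true false ω)) with hX
  have hXint : Integrable X P := hY.mul_bdd
    (measurable_const.sub (measurable_bInd.comp hDi)).aestronglyMeasurable
    (c := 1) (.of_forall fun ω => by cases Di true false ω <;> simp [bInd])
  have h00 : ∫ ω, Y (Di (Zi ω) (Zj ω) ω) (Dj (Zj ω) (Zi ω) ω) ω
      ∂(P[|{x | Zi x = false} ∩ {x | Zj x = false}]) = ∫ ω, Y false false ω ∂P := by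
    refine (integral_cond_congr (hZ (hsingle false false)) ?_).trans
      ((hIV.comp measurable_fst measurable_id).integral_cond_preimage hY.1 hZ
        (hsingle false false) hP00)
    filter_upwards [hosn] with ω hω hZω
    obtain ⟨hzi, hzj⟩ : Zi ω = false ∧ Zj ω = false := hZω
    simp [hzi, hzj, hω.1, hω.2.2.1]
  have h10 : ∫ ω, Y (Di (Zi ω) (Zj ω) ω) (Dj (Zj ω) (Zi ω) ω) ω *
      (1 - bInd (Di (Zi ω) (Zj ω) ω)) ∂(P[|{x | Zi x = true} ∩ {x | Zj x = false}]) =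
        ∫ ω, X ω ∂P := by
    refine (integral_cond_congr (hZ (hsingle true false)) ?_).trans
      ((hIV.comp (by fun_prop : Measurable fun p : ℝ × Bool => p.1 * (1 - bInd p.2))
        measurable_id).integral_cond_preimage hXint.1 hZ (hsingle true false) hP10)
    filter_upwards [hosn] with ω hω hZω
    obtain ⟨hzi, hzj⟩ : Zi ω = true ∧ Zj ω = false := hZω
    cases hd : Di true false ω <;> simp [hzi, hzj, hω.2.2.2, hd, bInd]
  rw [h00, h10, ← integral_sub hY hXint]
  refine integral_congr_ae ?_
  filter_upwards [hosn] with ω hω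
  cases hd : Di true false ω <;> simp [hX, hω.2.1, hd, bInd]

end

theorem stmt_7_general
    {Ω : Type*} [MeasurableSpace Ω] (P : Measure Ω) [IsProbabilityMeasure P]
    (Y : Bool → Bool → Ω → ℝ) (Di Dj : Bool → Bool → Ω → Bool)
    (Zi Zj : Ω → Bool)
    (hYint : ∀ d d', Integrable (Y d d') P)
    (hDimeas : ∀ z z', Measurable (Di z z'))
    (hDjmeas : ∀ z z', Measurable (Dj z z'))
    (hZi : Measurable Zi) (hZj : Measurable Zj)
    (hpos : ∀ z z', 0 < P ({x | Zi x = z} ∩ {x | Zj x = z'}))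
    (hIV : IndepFun
      (fun ω => ((fun d d' => Y d d' ω),
                 (fun z z' => Di z z' ω),
                 (fun z z' => Dj z z' ω)))
      (fun ω => (Zi ω, Zj ω)) P)
    (hosn : ∀ᵐ ω ∂P,
      Di false false ω = false ∧ Di false true ω = false ∧
      Dj false false ω = false ∧ Dj false true ω = false)
    :
    (∫ ω, Y false false ω * Set.indicator ({x | Di true false x = true ∧ Di false true x = false}) (fun _ => (1:ℝ)) ω ∂P)
      = (∫ ω, (Y (Di (Zi ω) (Zj ω) ω) (Dj (Zj ω) (Zi ω) ω) ω) ∂(P[|({x | Zi x = false} ∩ {x | Zj x = false})])) - (∫ ω, (Y (Di (Zi ω) (Zj ω) ω) (Dj (Zj ω) (Zi ω) ω) ω) * (1 - bInd (Di (Zi ω) (Zj ω) ω)) ∂(P[|({x | Zi x = true} ∩ {x | Zj x = false})]))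
    ∧ (∫ ω, Y false false ω * Set.indicator ({x | Dj true false x = true ∧ Dj false true x = false}) (fun _ => (1:ℝ)) ω ∂P)
      = (∫ ω, (Y (Di (Zi ω) (Zj ω) ω) (Dj (Zj ω) (Zi ω) ω) ω) ∂(P[|({x | Zi x = false} ∩ {x | Zj x = false})])) - (∫ ω, (Y (Di (Zi ω) (Zj ω) ω) (Dj (Zj ω) (Zi ω) ω) ω) * (1 - bInd (Dj (Zj ω) (Zi ω) ω)) ∂(P[|({x | Zi x = false} ∩ {x | Zj x = true})])) := by
  have hpos' (z z' : Bool) : P ({x | Zj x = z'} ∩ {x | Zi x = z}) ≠ 0 := by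
    rw [Set.inter_comm]; exact (hpos z z').ne'
  refine ⟨integral_mul_complier_indicator_eq (hYint false false) (hDimeas true false) hZi hZj
    (hpos _ _).ne' (hpos _ _).ne'
    (hIV.comp (φ := fun p => (p.1 false false, p.2.1 true false)) (by fun_prop) measurable_id)
    hosn, ?_⟩
  have hj := integral_mul_complier_indicator_eq (Y := fun d d' => Y d' d) (Di := Dj) (Dj := Di)
    (hYint false false) (hDjmeas true false) hZj hZi (hpos' _ _) (hpos' _ _)
    (hIV.comp (φ := fun p => (p.1 false false, p.2.2 true false)) (by fun_prop) measurable_swap)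
    (hosn.mono fun _ h => ⟨h.2.2.1, h.2.2.2, h.1, h.2.1⟩)
  rwa [Set.inter_comm {x | Zj x = false}, Set.inter_comm {x | Zj x = true}] at hj

theorem stmt_7
    {Ω : Type*} [MeasurableSpace Ω] (P : Measure Ω) [IsProbabilityMeasure P]
    (Y : Bool → Bool → Ω → ℝ) (Di Dj : Bool → Bool → Ω → Bool)
    (Zi Zj : Ω → Bool)
    (hYmeas : ∀ d d', Measurable (Y d d'))
    (hYint : ∀ d d', Integrable (Y d d') P)
    (hDimeas : ∀ z z', Measurable (Di z z'))
    (hDjmeas : ∀ z z', Measurable (Dj z z'))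
    (hZi : Measurable Zi) (hZj : Measurable Zj)
    (hpos : ∀ z z', 0 < P ({x | Zi x = z} ∩ {x | Zj x = z'}))
    (hIV : IndepFun
      (fun ω => ((fun d d' => Y d d' ω),
                 (fun z z' => Di z z' ω),
                 (fun z z' => Dj z z' ω)))
      (fun ω => (Zi ω, Zj ω)) P)
    (hmono : ∀ᵐ ω ∂P,
      (Di false false ω ≤ Di false true ω ∧ Di false true ω ≤ Di true false ω ∧
        Di true false ω ≤ Di true true ω) ∧
      (Dj false false ω ≤ Dj false true ω ∧ Dj false true ω ≤ Dj true false ω ∧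
        Dj true false ω ≤ Dj true true ω))
    (hosn : ∀ᵐ ω ∂P,
      Di false false ω = false ∧ Di false true ω = false ∧
      Dj false false ω = false ∧ Dj false true ω = false)
    :
    (∫ ω, Y false false ω * Set.indicator ({x | Di true false x = true ∧ Di false true x = false}) (fun _ => (1:ℝ)) ω ∂P)
      = (∫ ω, (Y (Di (Zi ω) (Zj ω) ω) (Dj (Zj ω) (Zi ω) ω) ω) ∂(P[|({x | Zi x = false} ∩ {x | Zj x = false})])) - (∫ ω, (Y (Di (Zi ω) (Zj ω) ω) (Dj (Zj ω) (Zi ω) ω) ω) * (1 - bInd (Di (Zi ω) (Zj ω) ω)) ∂(P[|({x | Zi x = true} ∩ {x | Zj x = false})]))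
    ∧ (∫ ω, Y false false ω * Set.indicator ({x | Dj true false x = true ∧ Dj false true x = false}) (fun _ => (1:ℝ)) ω ∂P)
      = (∫ ω, (Y (Di (Zi ω) (Zj ω) ω) (Dj (Zj ω) (Zi ω) ω) ω) ∂(P[|({x | Zi x = false} ∩ {x | Zj x = false})])) - (∫ ω, (Y (Di (Zi ω) (Zj ω) ω) (Dj (Zj ω) (Zi ω) ω) ω) * (1 - bInd (Dj (Zj ω) (Zi ω) ω)) ∂(P[|({x | Zi x = false} ∩ {x | Zj x = true})])) :=
  stmt_7_general P Y Di Dj Zi Zj hYint hDimeas hDjmeas hZi hZj hpos hIV hosn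
end

section
/- Local average potential outcomes under one-sided noncompliance, part III: under Assumptions 1, 2 and 4, E[Y(0,0) · 1_{NT_i ∩ NT_j}] = E[Y · (1−D_i)(1−D_j) | Z_i=1, Z_j=1] and P[NT_i ∩ NT_j] = E[(1−D_i)(1−D_j) | Z_i=1, Z_j=1], where 1_A denotes the indicator of the event A. -/
/-! On the event `{Zi = 1, Zj = 1}` the observed treatments are `Di(1,1)` and `Dj(1,1)`, so there the
observed integrands coincide with `Y(0,0) · 1_{NT_i ∩ NT_j}` and `1_{NT_i ∩ NT_j}`. These are functions
of the potential outcomes and treatments alone, hence independent of the instruments by the IV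
assumption, and conditioning on an instrument event does not change the expectation of a variable
independent of the instruments. -/

open MeasureTheory ProbabilityTheory

theorem ProbabilityTheory.IndepFun.integral_cond_preimage_s8 {Ω β : Type*}
    [MeasurableSpace Ω] [MeasurableSpace β]
    {P : Measure Ω} [IsFiniteMeasure P] {f : Ω → ℝ} {X : Ω → β} {t : Set β}
    (hfX : IndepFun f X P) (hf : Integrable f P) (hX : Measurable X) (ht : MeasurableSet t)
    (hPt : P (X ⁻¹' t) ≠ 0) :
    ∫ ω, f ω ∂P[|X ⁻¹' t] = ∫ ω, f ω ∂P := by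
  have hs : MeasurableSet (X ⁻¹' t) := hX ht
  have hind : IndepFun f ((X ⁻¹' t).indicator (1 : Ω → ℝ)) P := by
    rw [show (X ⁻¹' t).indicator (1 : Ω → ℝ) = t.indicator 1 ∘ X from
      funext fun ω => Set.indicator_comp_right X (g := (1 : β → ℝ))]
    exact hfX.comp measurable_id (measurable_const.indicator ht)
  have hrestrict : ∫ ω in X ⁻¹' t, f ω ∂P = (∫ ω, f ω ∂P) * P.real (X ⁻¹' t) := by
    rw [← integral_indicator hs, ← integral_indicator_one hs,
      ← hind.integral_fun_mul_eq_mul_integral hf.aestronglyMeasurable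
        ((aestronglyMeasurable_const).indicator hs)]
    congr 1 with ω
    by_cases h : ω ∈ X ⁻¹' t <;> simp [h]
  have hPt' : P.real (X ⁻¹' t) ≠ 0 := by
    simp [Measure.real, ENNReal.toReal_eq_zero_iff, hPt]
  rw [ProbabilityTheory.cond, integral_smul_measure, hrestrict, ENNReal.toReal_inv, smul_eq_mul]
  change (P.real _)⁻¹ * _ = _
  field_simp

theorem ProbabilityTheory.IndepFun.integral_cond_preimage_of_eqOn {Ω β : Type*}
    [MeasurableSpace Ω] [MeasurableSpace β]
    {P : Measure Ω} [IsFiniteMeasure P] {f g : Ω → ℝ} {X : Ω → β} {t : Set β}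
    (hfg : Set.EqOn f g (X ⁻¹' t)) (hgX : IndepFun g X P) (hg : Integrable g P)
    (hX : Measurable X) (ht : MeasurableSet t) (hPt : P (X ⁻¹' t) ≠ 0) :
    ∫ ω, f ω ∂P[|X ⁻¹' t] = ∫ ω, g ω ∂P :=
  (integral_congr_ae ((ae_cond_mem (hX ht)).mono hfg)).trans
    (hgX.integral_cond_preimage_s8 hg hX ht hPt)

theorem one_sub_bInd_mul_one_sub_bInd {Ω : Type*} (a b : Ω → Bool) (ω : Ω) :
    (1 - bInd (a ω)) * (1 - bInd (b ω)) =
      ({x | a x = false} ∩ {x | b x = false}).indicator (fun _ => 1) ω := by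
  by_cases ha : a ω <;> by_cases hb : b ω <;> simp [bInd, ha, hb]

theorem mul_one_sub_bInd_mul_one_sub_bInd (F : Bool → Bool → ℝ) (a b : Bool) :
    F a b * (1 - bInd a) * (1 - bInd b) = F false false * ((1 - bInd a) * (1 - bInd b)) := by
  cases a <;> cases b <;> simp [bInd]

theorem stmt_8_general
    {Ω : Type*} [MeasurableSpace Ω] (P : Measure Ω) [IsProbabilityMeasure P]
    (Y : Bool → Bool → Ω → ℝ) (Di Dj : Bool → Bool → Ω → Bool)
    (Zi Zj : Ω → Bool)
    (hYint : ∀ d d', Integrable (Y d d') P)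
    (hDimeas : ∀ z z', Measurable (Di z z'))
    (hDjmeas : ∀ z z', Measurable (Dj z z'))
    (hZi : Measurable Zi) (hZj : Measurable Zj)
    (hpos : ∀ z z', 0 < P ({x | Zi x = z} ∩ {x | Zj x = z'}))
    (hIV : IndepFun
      (fun ω => ((fun d d' => Y d d' ω),
                 (fun z z' => Di z z' ω),
                 (fun z z' => Dj z z' ω)))
      (fun ω => (Zi ω, Zj ω)) P)
    :
    (∫ ω, Y false false ω * Set.indicator ({x | Di true true x = false} ∩ {x | Dj true true x = false}) (fun _ => (1:ℝ)) ω ∂P)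
      = (∫ ω, (Y (Di (Zi ω) (Zj ω) ω) (Dj (Zj ω) (Zi ω) ω) ω) * (1 - bInd (Di (Zi ω) (Zj ω) ω)) * (1 - bInd (Dj (Zj ω) (Zi ω) ω)) ∂(P[|({x | Zi x = true} ∩ {x | Zj x = true})]))
    ∧ (P ({x | Di true true x = false} ∩ {x | Dj true true x = false})).toReal = (∫ ω, (1 - bInd (Di (Zi ω) (Zj ω) ω)) * (1 - bInd (Dj (Zj ω) (Zi ω) ω)) ∂(P[|({x | Zi x = true} ∩ {x | Zj x = true})])) := by
  set NT : Set Ω := {x | Di true true x = false} ∩ {x | Dj true true x = false}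
  have hNT : MeasurableSet NT :=
    (hDimeas true true (measurableSet_singleton false)).inter
      (hDjmeas true true (measurableSet_singleton false))
  have hNTind : (fun ω => (1 - bInd (Di true true ω)) * (1 - bInd (Dj true true ω))) =
      NT.indicator fun _ => 1 :=
    funext (one_sub_bInd_mul_one_sub_bInd _ _)
  have hs : {x | Zi x = true} ∩ {x | Zj x = true} =
      (fun ω => (Zi ω, Zj ω)) ⁻¹' ({true} ×ˢ {true}) := rfl
  have hZ : Measurable fun ω => (Zi ω, Zj ω) := hZi.prodMk hZj
  have ht : MeasurableSet ({true} ×ˢ {true} : Set (Bool × Bool)) :=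
    (measurableSet_singleton true).prod (measurableSet_singleton true)
  have hpos11 := (hs ▸ hpos true true).ne'
  rw [hs]
  refine ⟨Eq.symm ?_, Eq.symm ?_⟩
  · rw [IndepFun.integral_cond_preimage_of_eqOn
      (g := fun ω => Y false false ω * NT.indicator (fun _ => 1) ω) ?_ ?_ ?_ hZ ht hpos11]
    · rintro ω ⟨hi : Zi ω = true, hj : Zj ω = true⟩
      dsimp only
      rw [hi, hj, mul_one_sub_bInd_mul_one_sub_bInd (fun d d' => Y d d' ω), ← hNTind]
    · rw [← hNTind]
      exact hIV.comp (φ := fun p => p.1 false false *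
        ((1 - bInd (p.2.1 true true)) * (1 - bInd (p.2.2 true true)))) (by fun_prop) measurable_id
    · simpa only [← Set.indicator_mul_right, mul_one] using (hYint false false).indicator hNT
  · rw [IndepFun.integral_cond_preimage_of_eqOn (g := NT.indicator fun _ => 1) ?_ ?_ ?_ hZ ht
      hpos11]
    · exact integral_indicator_one hNT
    · rintro ω ⟨hi : Zi ω = true, hj : Zj ω = true⟩
      dsimp only
      rw [hi, hj, ← hNTind]
    · rw [← hNTind]
      exact hIV.comp (φ := fun p => (1 - bInd (p.2.1 true true)) * (1 - bInd (p.2.2 true true)))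
        (by fun_prop) measurable_id
    · exact (integrable_const 1).indicator hNT

theorem stmt_8
    {Ω : Type*} [MeasurableSpace Ω] (P : Measure Ω) [IsProbabilityMeasure P]
    (Y : Bool → Bool → Ω → ℝ) (Di Dj : Bool → Bool → Ω → Bool)
    (Zi Zj : Ω → Bool)
    (hYmeas : ∀ d d', Measurable (Y d d'))
    (hYint : ∀ d d', Integrable (Y d d') P)
    (hDimeas : ∀ z z', Measurable (Di z z'))
    (hDjmeas : ∀ z z', Measurable (Dj z z'))
    (hZi : Measurable Zi) (hZj : Measurable Zj)
    (hpos : ∀ z z', 0 < P ({x | Zi x = z} ∩ {x | Zj x = z'}))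
    (hIV : IndepFun
      (fun ω => ((fun d d' => Y d d' ω),
                 (fun z z' => Di z z' ω),
                 (fun z z' => Dj z z' ω)))
      (fun ω => (Zi ω, Zj ω)) P)
    (hmono : ∀ᵐ ω ∂P,
      (Di false false ω ≤ Di false true ω ∧ Di false true ω ≤ Di true false ω ∧
        Di true false ω ≤ Di true true ω) ∧
      (Dj false false ω ≤ Dj false true ω ∧ Dj false true ω ≤ Dj true false ω ∧
        Dj true false ω ≤ Dj true true ω))
    (hosn : ∀ᵐ ω ∂P,
      Di false false ω = false ∧ Di false true ω = false ∧
      Dj false false ω = false ∧ Dj false true ω = false)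
    :
    (∫ ω, Y false false ω * Set.indicator ({x | Di true true x = false} ∩ {x | Dj true true x = false}) (fun _ => (1:ℝ)) ω ∂P)
      = (∫ ω, (Y (Di (Zi ω) (Zj ω) ω) (Dj (Zj ω) (Zi ω) ω) ω) * (1 - bInd (Di (Zi ω) (Zj ω) ω)) * (1 - bInd (Dj (Zj ω) (Zi ω) ω)) ∂(P[|({x | Zi x = true} ∩ {x | Zj x = true})]))
    ∧ (P ({x | Di true true x = false} ∩ {x | Dj true true x = false})).toReal = (∫ ω, (1 - bInd (Di (Zi ω) (Zj ω) ω)) * (1 - bInd (Dj (Zj ω) (Zi ω) ω)) ∂(P[|({x | Zi x = true} ∩ {x | Zj x = true})])) :=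
  stmt_8_general P Y Di Dj Zi Zj hYint hDimeas hDjmeas hZi hZj hpos hIV
end
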